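/- The number of nonzero coordinates of Ψ(x) is exactly ∑_{k=0}^{d-1} C(m,k) C(d-1,k) for every x ∈ [0,1)^d; in particular it is O((log(1/ε))^{d-1}) for ε = 2^{-m}. -/

import Mathlib

open MeasureTheory Finset

/-- The dyadic box in `[0,1]^d` whose `i`-th factor is the dyadic interval
`[jj i / 2^{ℓ i}, (jj i + 1) / 2^{ℓ i})`. -/
def dyadicBox (d : ℕ) (ℓ jj : Fin d → ℕ) : Set (Fin d → ℝ) :=
  {x | ∀ i, (jj i : ℝ) / 2 ^ ℓ i ≤ x i ∧ x i < ((jj i : ℝ) + 1) / 2 ^ ℓ i}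

/-- The indicator function of the dyadic box with levels `ℓ` and positions `jj`. -/
noncomputable def chi (d : ℕ) (ℓ jj : Fin d → ℕ) (x : Fin d → ℝ) : ℝ :=
  Set.indicator (dyadicBox d ℓ jj) 1 x

/-- The embedding coordinate `Ψ_{k,r,R}` where `R` is the dyadic box with levels `ℓ` and
positions `jj`: for `k = 0` it is `χ_R`; for `k ≥ 1` it is
`2^{-k/2} ∏_{t=1}^{k} (χ_{R_{r_t}^+} - χ_{R_{r_t}^-})`, the halves being taken in
coordinate `r t`. -/
noncomputable def Psi (d k : ℕ) (r : Fin (k + 1) → Fin d) (ℓ jj : Fin d → ℕ)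
    (x : Fin d → ℝ) : ℝ :=
  if k = 0 then chi d ℓ jj x
  else (Real.sqrt 2)⁻¹ ^ k *
    ∏ t ∈ Finset.Ioi (0 : Fin (k + 1)),
      (chi d (Function.update ℓ (r t) (ℓ (r t) + 1))
          (Function.update jj (r t) (2 * jj (r t) + 1)) x
        - chi d (Function.update ℓ (r t) (ℓ (r t) + 1))
          (Function.update jj (r t) (2 * jj (r t))) x)

/-- The index set `𝒯` of admissible triples `(k, r, R)` at scale `m`. -/
def Triples (d m : ℕ) : Set ((k : ℕ) × (Fin (k + 1) → Fin d) × (Fin d → ℕ) × (Fin d → ℕ)) :=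
  {t | t.1 < d ∧ t.1 ≤ m ∧ StrictMono t.2.1 ∧ (t.2.1 0 : ℕ) = 0 ∧
    (∑ i, t.2.2.1 i) = m - t.1 ∧ (∀ i, t.2.2.2 i < 2 ^ t.2.2.1 i) ∧
    (∀ i, i ∉ Set.range t.2.1 → t.2.2.1 i = 0)}

/-!
Each factor `χ_{R⁺} - χ_{R⁻}` of `Ψ_{k,r,R}` is nonzero exactly on `R`, because the two halves
of `R` in direction `r t` partition it; hence `Ψ_{k,r,R}(x) ≠ 0` iff `x ∈ R`. For `x ∈ [0,1)^d`
and given levels `ℓ`, exactly one dyadic box of those levels contains `x`, the one at position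
`⌊x i * 2 ^ ℓ i⌋`. So the nonzero coordinates with a given `k` correspond to the pairs `(r, ℓ)`:
there are `C(d-1,k)` strictly increasing `r` with `r 0 = 0`, and, by stars and bars, `C(m,k)`
level vectors with sum `m - k` supported on the `k + 1` coordinates in the range of `r`.
-/

def dyadicInterval (l a : ℕ) : Set ℝ :=
  Set.Ico ((a : ℝ) / 2 ^ l) (((a : ℝ) + 1) / 2 ^ l)

theorem mem_dyadicBox_iff {d : ℕ} {ℓ jj : Fin d → ℕ} {x : Fin d → ℝ} :
    x ∈ dyadicBox d ℓ jj ↔ ∀ i, x i ∈ dyadicInterval (ℓ i) (jj i) :=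
  Iff.rfl

theorem dyadicInterval_eq_union (l a : ℕ) :
    dyadicInterval l a = dyadicInterval (l + 1) (2 * a) ∪ dyadicInterval (l + 1) (2 * a + 1) := by
  have hmid : ((2 * a : ℕ) + 1 : ℝ) / 2 ^ (l + 1) = ((2 * a + 1 : ℕ) : ℝ) / 2 ^ (l + 1) := by
    push_cast; ring
  rw [dyadicInterval, dyadicInterval, dyadicInterval, hmid, Set.Ico_union_Ico_eq_Ico]
  · congr 1 <;> (push_cast; rw [pow_succ]; field_simp)
    ring
  all_goals gcongr; push_cast; linarith

theorem disjoint_dyadicInterval_halves (l a : ℕ) :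
    Disjoint (dyadicInterval (l + 1) (2 * a)) (dyadicInterval (l + 1) (2 * a + 1)) := by
  have hmid : ((2 * a : ℕ) + 1 : ℝ) / 2 ^ (l + 1) = ((2 * a + 1 : ℕ) : ℝ) / 2 ^ (l + 1) := by
    push_cast; ring
  rw [dyadicInterval, dyadicInterval, hmid]
  exact Set.Ico_disjoint_Ico_same

theorem mem_dyadicInterval_iff_floor {l a : ℕ} {t : ℝ} (ht : 0 ≤ t) :
    t ∈ dyadicInterval l a ↔ ⌊t * 2 ^ l⌋₊ = a := by
  have hpow : (0 : ℝ) < 2 ^ l := by positivity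
  rw [Nat.floor_eq_iff (by positivity), dyadicInterval, Set.mem_Ico, div_le_iff₀ hpow,
    lt_div_iff₀ hpow]

theorem floor_mul_two_pow_lt {t : ℝ} (ht : t < 1) (l : ℕ) : ⌊t * 2 ^ l⌋₊ < 2 ^ l := by
  rw [Nat.floor_lt' (by positivity)]
  push_cast
  nlinarith [pow_pos (two_pos : (0 : ℝ) < 2) l]

theorem mem_dyadicBox_iff_eq_floor {d : ℕ} {ℓ jj : Fin d → ℕ} {x : Fin d → ℝ}
    (hx : ∀ i, 0 ≤ x i) : x ∈ dyadicBox d ℓ jj ↔ jj = fun i => ⌊x i * 2 ^ ℓ i⌋₊ := by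
  simp only [mem_dyadicBox_iff, mem_dyadicInterval_iff_floor (hx _), funext_iff, eq_comm]

section halves

variable {d : ℕ} (ℓ jj : Fin d → ℕ) (i : Fin d)

theorem mem_dyadicBox_update_iff {l a : ℕ} {x : Fin d → ℝ} :
    x ∈ dyadicBox d (Function.update ℓ i l) (Function.update jj i a) ↔
      x i ∈ dyadicInterval l a ∧ ∀ j ≠ i, x j ∈ dyadicInterval (ℓ j) (jj j) := by
  rw [mem_dyadicBox_iff]
  simp only [Function.apply_update₂ (fun _ => dyadicInterval)]
  exact Function.forall_update_iff _ fun j s => x j ∈ s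

abbrev lowerHalf : Set (Fin d → ℝ) :=
  dyadicBox d (Function.update ℓ i (ℓ i + 1)) (Function.update jj i (2 * jj i))

abbrev upperHalf : Set (Fin d → ℝ) :=
  dyadicBox d (Function.update ℓ i (ℓ i + 1)) (Function.update jj i (2 * jj i + 1))

theorem upperHalf_union_lowerHalf : upperHalf ℓ jj i ∪ lowerHalf ℓ jj i = dyadicBox d ℓ jj := by
  ext x
  conv_rhs => rw [← Function.update_eq_self i ℓ, ← Function.update_eq_self i jj]
  rw [Set.mem_union, mem_dyadicBox_update_iff, mem_dyadicBox_update_iff,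
    mem_dyadicBox_update_iff, ← or_and_right, or_comm, ← Set.mem_union, ← dyadicInterval_eq_union]

theorem disjoint_upperHalf_lowerHalf : Disjoint (upperHalf ℓ jj i) (lowerHalf ℓ jj i) :=
  Set.disjoint_left.mpr fun _ hup hlow =>
    (disjoint_dyadicInterval_halves _ _).ne_of_mem ((mem_dyadicBox_update_iff ℓ jj i).mp hlow).1
      ((mem_dyadicBox_update_iff ℓ jj i).mp hup).1 rfl

end halves

theorem indicator_one_sub_indicator_one_ne_zero_iff {α M : Type*} [AddGroupWithOne M]
    [NeZero (1 : M)] {s t : Set α} (hst : Disjoint s t) {a : α} :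
    s.indicator 1 a - t.indicator 1 a ≠ (0 : M) ↔ a ∈ s ∪ t := by
  by_cases hs : a ∈ s
  · simp [hs, Set.disjoint_left.mp hst hs]
  · by_cases ht : a ∈ t <;> simp [hs, ht]

theorem Psi_ne_zero_iff {d k : ℕ} (r : Fin (k + 1) → Fin d) (ℓ jj : Fin d → ℕ)
    (x : Fin d → ℝ) : Psi d k r ℓ jj x ≠ 0 ↔ x ∈ dyadicBox d ℓ jj := by
  have factor_ne_zero_iff (i : Fin d) :
      chi d (Function.update ℓ i (ℓ i + 1)) (Function.update jj i (2 * jj i + 1)) x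
        - chi d (Function.update ℓ i (ℓ i + 1)) (Function.update jj i (2 * jj i)) x ≠ 0
        ↔ x ∈ dyadicBox d ℓ jj := by
    rw [chi, chi,
      indicator_one_sub_indicator_one_ne_zero_iff (disjoint_upperHalf_lowerHalf ℓ jj i),
      upperHalf_union_lowerHalf]
  rcases eq_or_ne k 0 with rfl | hk
  · simp [Psi, chi]
  · have hIoi : (Finset.Ioi (0 : Fin (k + 1))).Nonempty :=
      ⟨Fin.last k, Finset.mem_Ioi.mpr (Fin.pos_iff_ne_zero.mpr (by simpa [Fin.ext_iff] using hk))⟩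
    have hscale : (Real.sqrt 2)⁻¹ ^ k ≠ 0 := by positivity
    rw [Psi, if_neg hk, mul_ne_zero_iff, Finset.prod_ne_zero_iff]
    simp only [factor_ne_zero_iff, hIoi.forall_const, true_and, hscale, ne_eq, not_false_eq_true]

theorem natCard_strictMono (α : Type*) [LinearOrder α] (k : ℕ) :
    Nat.card {f : Fin k → α // StrictMono f} = (Nat.card α).choose k := by
  let toEmb : {f : Fin k → α // StrictMono f} ≃ (Fin k ↪o α) :=
    { toFun f := OrderEmbedding.ofStrictMono f.1 f.2
      invFun e := ⟨e, e.strictMono⟩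
      left_inv _ := rfl
      right_inv _ := rfl }
  rw [Nat.card_congr (toEmb.trans Set.powersetCard.ofFinEmbEquiv), Set.powersetCard.card]

def strictMonoFromZeroEquiv (k n : ℕ) :
    {r : Fin (k + 1) → Fin (n + 1) // StrictMono r ∧ (r 0 : ℕ) = 0} ≃
      {f : Fin k → Fin n // StrictMono f} where
  toFun r := ⟨fun t => (r.1 t.succ).pred
      (Fin.pos_iff_ne_zero.mp ((Fin.ext r.2.2 : r.1 0 = 0) ▸ r.2.1 t.succ_pos)),
    fun _ _ hst => Fin.pred_lt_pred_iff.mpr (r.2.1 (Fin.succ_lt_succ_iff.mpr hst))⟩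
  invFun f := ⟨Fin.cons 0 (Fin.succ ∘ f.1),
    Fin.strictMono_cons.mpr ⟨fun _ => Fin.succ_pos _, (Fin.strictMono_succ).comp f.2⟩, rfl⟩
  left_inv r := by
    refine Subtype.ext (funext fun j => ?_)
    cases j using Fin.cases with
    | zero => exact (Fin.ext r.2.2).symm
    | succ t => simp
  right_inv f := by
    ext t
    simp

theorem natCard_strictMono_fromZero (k n : ℕ) :
    Nat.card {r : Fin (k + 1) → Fin (n + 1) // StrictMono r ∧ (r 0 : ℕ) = 0} = n.choose k := by
  rw [Nat.card_congr (strictMonoFromZeroEquiv k n), natCard_strictMono, Nat.card_fin]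

section levels

variable {ι α : Type*} [Fintype ι] [Fintype α] {r : ι → α}

noncomputable def Function.Injective.vanishingOffRangeEquiv {M : Type*} [Zero M]
    (hr : r.Injective) :
    {g : α → M // ∀ a, a ∉ Set.range r → g a = 0} ≃ (ι → M) where
  toFun g := g.1 ∘ r
  invFun f := ⟨Function.extend r f 0, fun _ ha => Function.extend_apply' _ _ _ ha⟩
  left_inv g := by
    ext a
    by_cases ha : a ∈ Set.range r
    · obtain ⟨i, rfl⟩ := ha
      exact hr.extend_apply _ _ i
    · exact (Function.extend_apply' _ _ _ ha).trans (g.2 a ha).symm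
  right_inv f := funext (hr.extend_apply f 0)

instance (n : ℕ) : Finite {f : ι → ℕ // ∑ i, f i = n} := by
  classical
  exact Finite.of_equiv _ (Sym.equivNatSumOfFintype ι n)

instance (n : ℕ) : Finite {g : α → ℕ // (∀ a, a ∉ Set.range r → g a = 0) ∧ ∑ a, g a = n} :=
  Finite.of_injective (fun g => (⟨g.1, g.2.2⟩ : {g : α → ℕ // ∑ a, g a = n}))
    fun _ _ h => Subtype.ext (congrArg Subtype.val h :)

theorem natCard_sum_eq_choose (n : ℕ) :
    Nat.card {f : ι → ℕ // ∑ i, f i = n} = (Nat.card ι + n - 1).choose n := by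
  classical
  rw [← Nat.card_congr (Sym.equivNatSumOfFintype ι n), Sym.natCard_sym_eq_choose]

theorem natCard_vanishingOffRange_sum_eq_choose (hr : r.Injective) (n : ℕ) :
    Nat.card {g : α → ℕ // (∀ a, a ∉ Set.range r → g a = 0) ∧ ∑ a, g a = n} =
      (Nat.card ι + n - 1).choose n := by
  rw [← Nat.card_congr (Equiv.subtypeSubtypeEquivSubtypeInter _ _), ← natCard_sum_eq_choose]
  refine Nat.card_congr (hr.vanishingOffRangeEquiv.subtypeEquiv fun g => ?_)
  rw [← Fintype.sum_of_injective r hr _ _ g.2 fun _ => rfl]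
  rfl

end levels

noncomputable def nonzeroCoordEquiv {d m : ℕ} (hm : d - 1 ≤ m) {x : Fin d → ℝ}
    (hx : ∀ i, 0 ≤ x i ∧ x i < 1) :
    {t : Triples d m // Psi d t.val.1 t.val.2.1 t.val.2.2.1 t.val.2.2.2 x ≠ 0} ≃
      Σ k : Fin d, Σ r : {r : Fin (k + 1) → Fin d // StrictMono r ∧ (r 0 : ℕ) = 0},
        {ℓ : Fin d → ℕ // (∀ i, i ∉ Set.range r.1 → ℓ i = 0) ∧ ∑ i, ℓ i = m - k} where
  toFun := fun ⟨⟨⟨k, r, ℓ, _⟩, hT⟩, _⟩ =>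
    ⟨⟨k, hT.1⟩, ⟨r, hT.2.2.1, hT.2.2.2.1⟩, ⟨ℓ, hT.2.2.2.2.2.2, hT.2.2.2.2.1⟩⟩
  invFun := fun ⟨k, r, ℓ⟩ =>
    ⟨⟨⟨k, r.1, ℓ.1, fun i => ⌊x i * 2 ^ ℓ.1 i⌋₊⟩, k.2, (Nat.le_sub_one_of_lt k.2).trans hm,
        r.2.1, r.2.2, ℓ.2.2, fun i => floor_mul_two_pow_lt (hx i).2 _, ℓ.2.1⟩,
      (Psi_ne_zero_iff _ _ _ x).mpr ((mem_dyadicBox_iff_eq_floor fun i => (hx i).1).mpr rfl)⟩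
  left_inv := by
    rintro ⟨⟨⟨k, r, ℓ, jj⟩, hT⟩, hΨ⟩
    obtain rfl : jj = fun i => ⌊x i * 2 ^ ℓ i⌋₊ :=
      (mem_dyadicBox_iff_eq_floor fun i => (hx i).1).mp ((Psi_ne_zero_iff _ _ _ x).mp hΨ)
    rfl
  right_inv _ := rfl

/-- For every `x ∈ [0,1)^d`, the number of nonzero coordinates of the embedding vector
`Ψ(x)` is exactly `∑_{k=0}^{d-1} C(m,k) C(d-1,k)`. -/
theorem stmt15 (d m : ℕ) (hd : 1 ≤ d) (hm : d - 1 ≤ m)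
    (x : Fin d → ℝ) (hx : ∀ i, 0 ≤ x i ∧ x i < 1) :
    Nat.card {t : Triples d m // Psi d t.val.1 t.val.2.1 t.val.2.2.1 t.val.2.2.2 x ≠ 0}
      = ∑ k ∈ Finset.range d, m.choose k * (d - 1).choose k := by
  obtain ⟨n, rfl⟩ : ∃ n, d = n + 1 := ⟨d - 1, by omega⟩
  have hlevels (k : Fin (n + 1))
      (r : {r : Fin (k + 1) → Fin (n + 1) // StrictMono r ∧ (r 0 : ℕ) = 0}) :
      Nat.card {ℓ : Fin (n + 1) → ℕ // (∀ i, i ∉ Set.range r.1 → ℓ i = 0) ∧ ∑ i, ℓ i = m - k} =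
        m.choose k := by
    rw [natCard_vanishingOffRange_sum_eq_choose r.2.1.injective, Nat.card_fin,
      show (k : ℕ) + 1 + (m - k) - 1 = m by omega, Nat.choose_symm (by omega)]
  rw [Nat.card_congr (nonzeroCoordEquiv hm hx), Nat.card_sigma, ← Fin.sum_univ_eq_sum_range]
  refine Finset.sum_congr rfl fun k _ => ?_
  rw [Nat.card_sigma, Finset.sum_congr rfl fun r _ => hlevels k r, Finset.sum_const,
    Finset.card_univ, ← Nat.card_eq_fintype_card, natCard_strictMono_fromZero, smul_eq_mul,
    Nat.add_sub_cancel, mul_comm]
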